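/- arXiv:2209.14838 — 2 statements merged into one kernel-verified Lean document; each statement's English description precedes it below -/
import Mathlib

section
/- In a compact Hausdorff left-continuous semigroup S, if I is a minimal left ideal, then I is the disjoint union of the groups u*I as u ranges over the idempotents of I. -/
/-- A left ideal of a multiplicative structure: a nonempty subset closed under
left multiplication by arbitrary elements. -/
def IsLeftIdeal {S : Type*} [Mul S] (I : Set S) : Prop :=
  I.Nonempty ∧ ∀ s : S, ∀ x ∈ I, s * x ∈ I

/-- A minimal left ideal: a left ideal containing no proper left ideal. -/
def IsMinLeftIdeal {S : Type*} [Mul S] (I : Set S) : Prop :=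
  IsLeftIdeal I ∧ ∀ J ⊆ I, IsLeftIdeal J → J = I

/-- A subset that is a group under the ambient multiplication. -/
def IsGroupSet {S : Type*} [Mul S] (I : Set S) : Prop :=
  (∀ x ∈ I, ∀ y ∈ I, x * y ∈ I) ∧
    ∃ u ∈ I, (∀ x ∈ I, u * x = x ∧ x * u = x) ∧
      ∀ x ∈ I, ∃ y ∈ I, x * y = u ∧ y * x = u


/-!
Right multiplication by any `x ∈ I` maps `S` onto `I`, so `I` is compact and the elements `a ∈ I`
with `a * x = x` form a nonempty compact subsemigroup; by the Ellis–Numakura lemma it contains an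
idempotent `u`, whence `x = u * x ∈ u * I`. Disjointness is purely algebraic: inside a minimal left
ideal every idempotent is a right identity, and `u * I` has right inverses with respect to `u`, so
an element `z` lying in both `u * I` and `v * I` forces `u = v * u = v`.
-/

namespace IsMinLeftIdeal

section Algebraic

variable {S : Type*} [Semigroup S] {I : Set S}

theorem image_mul_right_eq (hI : IsMinLeftIdeal I) {x : S} (hx : x ∈ I) :
    (· * x) '' I = I := by
  refine hI.2 _ ?_ ⟨hI.1.1.image _, ?_⟩
  · rintro _ ⟨a, -, rfl⟩
    exact hI.1.2 a x hx
  · rintro s _ ⟨a, ha, rfl⟩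
    exact ⟨s * a, hI.1.2 s a ha, mul_assoc s a x⟩

theorem range_mul_right_eq (hI : IsMinLeftIdeal I) {x : S} (hx : x ∈ I) :
    Set.range (· * x) = I := by
  refine (Set.range_subset_iff.2 fun a => hI.1.2 a x hx).antisymm ?_
  rw [← hI.image_mul_right_eq hx]
  exact Set.image_subset_range _ _

theorem exists_mul_eq (hI : IsMinLeftIdeal I) {x t : S} (hx : x ∈ I) (ht : t ∈ I) :
    ∃ c ∈ I, c * x = t := by
  rwa [← hI.image_mul_right_eq hx] at ht

theorem mul_eq_self_of_idempotent (hI : IsMinLeftIdeal I) {x u : S} (hx : x ∈ I) (hu : u ∈ I)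
    (huu : u * u = u) : x * u = x := by
  obtain ⟨a, -, rfl⟩ := hI.exists_mul_eq hu hx
  rw [mul_assoc, huu]

theorem exists_left_inv (hI : IsMinLeftIdeal I) {u z : S} (hu : u ∈ I) (huu : u * u = u)
    (hz : z ∈ I) : ∃ y ∈ I, u * y = y ∧ y * z = u := by
  obtain ⟨c, hc, hcz⟩ := hI.exists_mul_eq hz hu
  exact ⟨u * c, hI.1.2 u c hc, by rw [← mul_assoc, huu], by rw [mul_assoc, hcz, huu]⟩

theorem exists_right_inv (hI : IsMinLeftIdeal I) {u z : S} (hu : u ∈ I) (huu : u * u = u)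
    (hz : z ∈ I) (huz : u * z = z) : ∃ y, z * y = u := by
  obtain ⟨y, hy, huy, hyz⟩ := hI.exists_left_inv hu huu hz
  obtain ⟨w, -, -, hwy⟩ := hI.exists_left_inv hu huu hy
  refine ⟨y, ?_⟩
  calc z * y = (w * y) * z * y := by rw [hwy, huz]
    _ = w * (y * z) * y := by simp only [mul_assoc]
    _ = u := by rw [hyz, mul_assoc, huy, hwy]

theorem eq_of_mul_eq_self (hI : IsMinLeftIdeal I) {u v z : S} (hu : u ∈ I) (huu : u * u = u)
    (hv : v ∈ I) (hz : z ∈ I) (huz : u * z = z) (hvz : v * z = z) : u = v := by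
  obtain ⟨y, hzy⟩ := hI.exists_right_inv hu huu hz huz
  calc u = v * u := by rw [← hzy, ← mul_assoc, hvz]
    _ = v := hI.mul_eq_self_of_idempotent hv hu huu

end Algebraic

section Topological

variable {S : Type*} [Semigroup S] [TopologicalSpace S] [CompactSpace S] {I : Set S}

theorem isCompact (hc : ∀ y : S, Continuous fun x => x * y) (hI : IsMinLeftIdeal I) :
    IsCompact I := by
  obtain ⟨x, hx⟩ := hI.1.1
  rw [← hI.range_mul_right_eq hx]
  exact isCompact_range (hc x)

theorem exists_idempotent_mul_eq [T2Space S] (hc : ∀ y : S, Continuous fun x => x * y)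
    (hI : IsMinLeftIdeal I) {x : S} (hx : x ∈ I) : ∃ u ∈ I, u * u = u ∧ u * x = x := by
  have hT : IsCompact {a ∈ I | a * x = x} :=
    (hI.isCompact hc).inter_right (isClosed_singleton.preimage (hc x))
  obtain ⟨u, ⟨huI, hux⟩, huu⟩ := exists_idempotent_in_compact_subsemigroup hc _
    (hI.exists_mul_eq hx hx) hT fun a ⟨_, hax⟩ b ⟨hb, hbx⟩ =>
      ⟨hI.1.2 a b hb, by rw [mul_assoc, hbx, hax]⟩
  exact ⟨u, huI, huu, hux⟩

end Topological

end IsMinLeftIdeal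

/-- A minimal left ideal of a compact Hausdorff left-continuous semigroup is the
disjoint union of the groups $u*I$ as $u$ ranges over the idempotents of $I$. -/
theorem minLeftIdeal_disjoint_union_of_groups {S : Type*} [Semigroup S] [TopologicalSpace S]
    [CompactSpace S] [T2Space S]
    (hc : ∀ y : S, Continuous fun x => x * y)
    (I : Set S) (hI : IsMinLeftIdeal I) :
    (I = ⋃ u ∈ {u ∈ I | u * u = u}, (fun x => u * x) '' I) ∧
    (∀ u ∈ I, u * u = u → ∀ v ∈ I, v * v = v → u ≠ v →
        Disjoint ((fun x => u * x) '' I) ((fun x => v * x) '' I)) := by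
  refine ⟨Set.Subset.antisymm (fun x hx => ?_) ?_, ?_⟩
  · obtain ⟨u, hu, huu, hux⟩ := hI.exists_idempotent_mul_eq hc hx
    exact Set.mem_biUnion (x := u) ⟨hu, huu⟩ ⟨x, hx, hux⟩
  · simp only [Set.iUnion_subset_iff]
    rintro u ⟨hu, -⟩ _ ⟨a, ha, rfl⟩
    exact hI.1.2 u a ha
  · intro u hu huu v hv hvv huv
    refine Set.disjoint_left.2 ?_
    rintro _ ⟨a, ha, rfl⟩ ⟨b, -, hb⟩
    refine huv (hI.eq_of_mul_eq_self hu huu hv (hI.1.2 u a ha) ?_ ?_)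
    · rw [← mul_assoc, huu]
    · rw [← show v * b = u * a from hb, ← mul_assoc, hvv]
end

section
/- Let G be a group acting on a Boolean algebra 𝒜 of subsets of G by left translation, and suppose 𝒜 is d-closed. If S is a subgroup of (S(𝒜), *), then all endomorphisms d_p for p ∈ S have the same kernel: Ker d_p = Ker d_q for all p, q ∈ S. -/
open Set

/-- Left translate of a set: \$gA = \{g·a : a ∈ A\}\$. -/
def trL {G : Type*} [Group G] (g : G) (A : Set G) : Set G := (fun x => g * x) '' A

/-- A \$G\$-algebra: a Boolean algebra of subsets of \$G\$ closed under left translation. -/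
def IsGAlgebra {G : Type*} [Group G] (𝒜 : Set (Set G)) : Prop :=
  ∅ ∈ 𝒜 ∧ (∀ A ∈ 𝒜, Aᶜ ∈ 𝒜) ∧ (∀ A ∈ 𝒜, ∀ B ∈ 𝒜, A ∪ B ∈ 𝒜) ∧
    ∀ g : G, ∀ A ∈ 𝒜, trL g A ∈ 𝒜

/-- An ultrafilter on the Boolean algebra 𝒜 of subsets of \$G\$. -/
def IsUltra {G : Type*} [Group G] (𝒜 p : Set (Set G)) : Prop :=
  p ⊆ 𝒜 ∧ ∅ ∉ p ∧ univ ∈ p ∧ (∀ A ∈ p, ∀ B ∈ p, A ∩ B ∈ p) ∧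
    (∀ A ∈ p, ∀ B ∈ 𝒜, A ⊆ B → B ∈ p) ∧ ∀ A ∈ 𝒜, A ∈ p ∨ Aᶜ ∈ p

/-- The map \$d_p(A) = \{g ∈ G : g⁻¹A ∈ p\}\$. -/
def dmap {G : Type*} [Group G] (p : Set (Set G)) (A : Set G) : Set G :=
  {g : G | trL g⁻¹ A ∈ p}

/-- 𝒜 is d-closed: closed under \$d_p\$ for every ultrafilter \$p\$ on 𝒜. -/
def DClosed {G : Type*} [Group G] (𝒜 : Set (Set G)) : Prop :=
  ∀ p : Set (Set G), IsUltra 𝒜 p → ∀ A ∈ 𝒜, dmap p A ∈ 𝒜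

/-- The semigroup operation on ultrafilters: \$A ∈ p*q\$ iff \$A ∈ 𝒜\$ and \$d_q(A) ∈ p\$. -/
def ustar {G : Type*} [Group G] (𝒜 p q : Set (Set G)) : Set (Set G) :=
  {A | A ∈ 𝒜 ∧ dmap q A ∈ p}

def dKer {G : Type*} [Group G] (𝒜 p : Set (Set G)) : Set (Set G) :=
  {A | A ∈ 𝒜 ∧ dmap p A = ∅}

section

variable {G : Type*} [Group G]

lemma mem_trL (g : G) (A : Set G) (x : G) : x ∈ trL g A ↔ g⁻¹ * x ∈ A := by
  constructor
  · rintro ⟨a, ha, rfl⟩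
    simpa using ha
  · intro h
    exact ⟨g⁻¹ * x, h, mul_inv_cancel_left g x⟩

lemma trL_trL (g h : G) (A : Set G) : trL g (trL h A) = trL (g * h) A := by
  ext x
  simp [mem_trL, mul_assoc]

lemma trL_empty (g : G) : trL g (∅ : Set G) = ∅ :=
  image_empty _

lemma dmap_empty {p : Set (Set G)} (hp : ∅ ∉ p) : dmap p (∅ : Set G) = ∅ := by
  ext g
  simpa [dmap, trL_empty] using hp

lemma dmap_trL (q : Set (Set G)) (g : G) (A : Set G) :
    dmap q (trL g A) = trL g (dmap q A) := by
  ext x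
  simp only [dmap, mem_trL, mem_ofPred_eq, trL_trL, mul_inv_rev, inv_inv]

lemma dmap_ustar {𝒜 : Set (Set G)} (h𝒜 : ∀ g : G, ∀ A ∈ 𝒜, trL g A ∈ 𝒜)
    (p q : Set (Set G)) {A : Set G} (hA : A ∈ 𝒜) :
    dmap (ustar 𝒜 p q) A = dmap p (dmap q A) := by
  ext g
  change trL g⁻¹ A ∈ 𝒜 ∧ dmap q (trL g⁻¹ A) ∈ p ↔ trL g⁻¹ (dmap q A) ∈ p
  rw [dmap_trL]
  exact and_iff_right (h𝒜 _ A hA)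

lemma dKer_subset_dKer_ustar {𝒜 : Set (Set G)} (h𝒜 : ∀ g : G, ∀ A ∈ 𝒜, trL g A ∈ 𝒜)
    {p : Set (Set G)} (q : Set (Set G)) (hp : ∅ ∉ p) :
    dKer 𝒜 q ⊆ dKer 𝒜 (ustar 𝒜 p q) := by
  rintro A ⟨hA, hqA⟩
  exact ⟨hA, by rw [dmap_ustar h𝒜 p q hA, hqA, dmap_empty hp]⟩

end

theorem common_kernel_of_subgroup_general {G : Type*} [Group G]
    (𝒜 : Set (Set G)) (h𝒜 : IsGAlgebra 𝒜)
    (S : Set (Set (Set G)))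
    (hSu : ∀ p ∈ S, IsUltra 𝒜 p)
    (hSgrp : ∃ u ∈ S, (∀ p ∈ S, ustar 𝒜 u p = p ∧ ustar 𝒜 p u = p) ∧
      ∀ p ∈ S, ∃ q ∈ S, ustar 𝒜 p q = u ∧ ustar 𝒜 q p = u)
    (p q : Set (Set G)) (hp : p ∈ S) (hq : q ∈ S) :
    {A | A ∈ 𝒜 ∧ dmap p A = ∅} = {A | A ∈ 𝒜 ∧ dmap q A = ∅} := by
  obtain ⟨u, -, hunit, hinv⟩ := hSgrp
  have htr := h𝒜.2.2.2
  -- Ker d_r ⊆ Ker d_{r'*r} = Ker d_u and Ker d_u ⊆ Ker d_{r*u} = Ker d_r.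
  have dKer_eq_unit : ∀ r ∈ S, dKer 𝒜 r = dKer 𝒜 u := by
    intro r hr
    obtain ⟨r', hr', -, hr'r⟩ := hinv r hr
    apply le_antisymm
    · simpa only [hr'r] using dKer_subset_dKer_ustar htr r (hSu r' hr').2.1
    · simpa only [(hunit r hr).2] using dKer_subset_dKer_ustar htr u (hSu r hr).2.1
  exact (dKer_eq_unit p hp).trans (dKer_eq_unit q hq).symm

/-- If $S$ is a subgroup of the semigroup $(S(𝒜), *)$ of ultrafilters on a d-closed
$G$-algebra 𝒜, then all the endomorphisms $d_p$, $p ∈ S$, have the same kernel. -/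
theorem common_kernel_of_subgroup {G : Type*} [Group G]
    (𝒜 : Set (Set G)) (h𝒜 : IsGAlgebra 𝒜) (hd : DClosed 𝒜)
    (S : Set (Set (Set G)))
    (hSu : ∀ p ∈ S, IsUltra 𝒜 p)
    (hSmul : ∀ p ∈ S, ∀ q ∈ S, ustar 𝒜 p q ∈ S)
    (hSgrp : ∃ u ∈ S, (∀ p ∈ S, ustar 𝒜 u p = p ∧ ustar 𝒜 p u = p) ∧
      ∀ p ∈ S, ∃ q ∈ S, ustar 𝒜 p q = u ∧ ustar 𝒜 q p = u)
    (p q : Set (Set G)) (hp : p ∈ S) (hq : q ∈ S) :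
    {A | A ∈ 𝒜 ∧ dmap p A = ∅} = {A | A ∈ 𝒜 ∧ dmap q A = ∅} :=
  common_kernel_of_subgroup_general 𝒜 h𝒜 S hSu hSgrp p q hp hq
end
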